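/- arXiv:2002.10995 — 6 statements merged into one kernel-verified Lean document; each statement's English description precedes it below -/
import Mathlib

section
/- Let n ≥ 1 be an integer. The complex algebras A = ℂ[x,y,z]/(z·(xⁿ·y − 1) − (x − 1)) and B = ℂ[x₁,x₂,u,w]/(u·x₁ⁿ − (x₂ − 1), w·x₂ − (x₁ − 1)) are isomorphic as ℂ-algebras, via the map sending x₁ ↦ x, x₂ ↦ 1 − xⁿ·y, u ↦ −y, w ↦ −z. -/
/-!
The inverse map sends `x ↦ x₁`, `y ↦ -u`, `z ↦ -w`. Both substitutions respect the relations: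
under the forward one `u x₁ⁿ - (x₂ - 1)` vanishes and `w x₂ - (x₁ - 1)` becomes the relation of
`A`, while the relation of `A` pulls back to `w (u x₁ⁿ - (x₂ - 1)) + (w x₂ - (x₁ - 1))`.
The composites fix every variable, except that `x₂` returns as `1 + u x₁ⁿ`, which agrees with `x₂`
modulo the first relation of `B`.
-/

open MvPolynomial

noncomputable section

namespace MvPolynomial

variable {R σ τ : Type*} [CommRing R]
  {I : Ideal (MvPolynomial σ R)} {J : Ideal (MvPolynomial τ R)}

def quotientEquivOfAeval (v : σ → MvPolynomial τ R) (w : τ → MvPolynomial σ R)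
    (hv : I ≤ J.comap (aeval v)) (hw : J ≤ I.comap (aeval w))
    (hwv : ∀ i, aeval w (v i) - X i ∈ I) (hvw : ∀ j, aeval v (w j) - X j ∈ J) :
    (MvPolynomial σ R ⧸ I) ≃ₐ[R] (MvPolynomial τ R ⧸ J) :=
  AlgEquiv.ofAlgHom (Ideal.quotientMapₐ J (aeval v) hv) (Ideal.quotientMapₐ I (aeval w) hw)
    (Ideal.Quotient.algHom_ext R <| algHom_ext fun j ↦ by
      simpa [Ideal.Quotient.mk_eq_mk_iff_sub_mem] using hvw j)
    (Ideal.Quotient.algHom_ext R <| algHom_ext fun i ↦ by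
      simpa [Ideal.Quotient.mk_eq_mk_iff_sub_mem] using hwv i)

theorem quotientEquivOfAeval_mk (v : σ → MvPolynomial τ R) (w : τ → MvPolynomial σ R)
    (hv : I ≤ J.comap (aeval v)) (hw : J ≤ I.comap (aeval w))
    (hwv : ∀ i, aeval w (v i) - X i ∈ I) (hvw : ∀ j, aeval v (w j) - X j ∈ J)
    (p : MvPolynomial σ R) :
    quotientEquivOfAeval v w hv hw hwv hvw (Ideal.Quotient.mk I p) =
      Ideal.Quotient.mk J (aeval v p) :=
  rfl

end MvPolynomial

theorem stmt_0_general (n : ℕ) :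
    ∃ e : (MvPolynomial (Fin 4) ℂ ⧸ Ideal.span
        ({X 2 * (X 0) ^ n - (X 1 - 1), X 3 * X 1 - (X 0 - 1)} :
          Set (MvPolynomial (Fin 4) ℂ))) ≃ₐ[ℂ]
      (MvPolynomial (Fin 3) ℂ ⧸ Ideal.span
        ({X 2 * ((X 0) ^ n * X 1 - 1) - (X 0 - 1)} : Set (MvPolynomial (Fin 3) ℂ))),
      e (Ideal.Quotient.mk _ (X 0)) = Ideal.Quotient.mk _ (X 0) ∧
      e (Ideal.Quotient.mk _ (X 1)) = Ideal.Quotient.mk _ (1 - (X 0) ^ n * X 1) ∧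
      e (Ideal.Quotient.mk _ (X 2)) = Ideal.Quotient.mk _ (- X 1) ∧
      e (Ideal.Quotient.mk _ (X 3)) = Ideal.Quotient.mk _ (- X 2) := by
  set gB₁ : MvPolynomial (Fin 4) ℂ := X 2 * (X 0) ^ n - (X 1 - 1)
  set gB₂ : MvPolynomial (Fin 4) ℂ := X 3 * X 1 - (X 0 - 1)
  set gA : MvPolynomial (Fin 3) ℂ := X 2 * ((X 0) ^ n * X 1 - 1) - (X 0 - 1)
  let v : Fin 4 → MvPolynomial (Fin 3) ℂ := ![X 0, 1 - (X 0) ^ n * X 1, - X 1, - X 2]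
  let w : Fin 3 → MvPolynomial (Fin 4) ℂ := ![X 0, - X 2, - X 3]
  have hB₁ : gB₁ ∈ Ideal.span {gB₁, gB₂} := Ideal.subset_span (by simp)
  have hB₂ : gB₂ ∈ Ideal.span {gB₁, gB₂} := Ideal.subset_span (by simp)
  have hA : gA ∈ Ideal.span {gA} := Ideal.mem_span_singleton_self gA
  have hv₁ : aeval v gB₁ = 0 := by simp [gB₁, v]; ring
  have hv₂ : aeval v gB₂ = gA := by simp [gB₂, gA, v]; ring
  have hw : aeval w gA = X 3 * gB₁ + gB₂ := by simp [gA, gB₁, gB₂, w]; ring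
  have hle_v : Ideal.span {gB₁, gB₂} ≤ (Ideal.span {gA}).comap (aeval v) := by
    rw [Ideal.span_le, Set.insert_subset_iff, Set.singleton_subset_iff]
    simp only [SetLike.mem_coe, Ideal.mem_comap, hv₁, hv₂, hA, Ideal.zero_mem, and_self]
  have hle_w : Ideal.span {gA} ≤ (Ideal.span {gB₁, gB₂}).comap (aeval w) := by
    rw [Ideal.span_le, Set.singleton_subset_iff, SetLike.mem_coe, Ideal.mem_comap, hw]
    exact add_mem (Ideal.mul_mem_left _ _ hB₁) hB₂
  have hwv : ∀ i, aeval w (v i) - X i ∈ Ideal.span {gB₁, gB₂} := by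
    intro i
    fin_cases i <;> simp [v, w]
    convert hB₁ using 1
    ring
  have hvw : ∀ j, aeval v (w j) - X j ∈ Ideal.span {gA} := by
    intro j
    fin_cases j <;> simp [v, w]
  refine ⟨quotientEquivOfAeval v w hle_v hle_w hwv hvw, ?_, ?_, ?_, ?_⟩ <;>
    simp [quotientEquivOfAeval_mk, v]

/-- Variables of `B = ℂ[x₁,x₂,u,w]`: `x₁ = X 0`, `x₂ = X 1`, `u = X 2`, `w = X 3`.
    Variables of `A = ℂ[x,y,z]`: `x = X 0`, `y = X 1`, `z = X 2`. -/
theorem stmt_0 (n : ℕ) (hn : 1 ≤ n) :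
    ∃ e : (MvPolynomial (Fin 4) ℂ ⧸ Ideal.span
        ({X 2 * (X 0) ^ n - (X 1 - 1), X 3 * X 1 - (X 0 - 1)} :
          Set (MvPolynomial (Fin 4) ℂ))) ≃ₐ[ℂ]
      (MvPolynomial (Fin 3) ℂ ⧸ Ideal.span
        ({X 2 * ((X 0) ^ n * X 1 - 1) - (X 0 - 1)} : Set (MvPolynomial (Fin 3) ℂ))),
      e (Ideal.Quotient.mk _ (X 0)) = Ideal.Quotient.mk _ (X 0) ∧
      e (Ideal.Quotient.mk _ (X 1)) = Ideal.Quotient.mk _ (1 - (X 0) ^ n * X 1) ∧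
      e (Ideal.Quotient.mk _ (X 2)) = Ideal.Quotient.mk _ (- X 1) ∧
      e (Ideal.Quotient.mk _ (X 3)) = Ideal.Quotient.mk _ (- X 2) :=
  stmt_0_general n
end
end

section
/- Let p₁, p₂ ∈ ℂ[t] be monic polynomials, let d_j = deg p_j + 1, and let p̂_j(t) = t^{d_j−1}·p_j(1/t) be the reversed polynomials (these are genuine polynomials with p̂_j(0) = 1). Let R = ℂ[x₁,x₂,y₁,y₂]/(y₁x₁^{d₁} − x₂ + p̂₁(x₁), y₂x₂^{d₂} − x₁ + p̂₂(x₂)). Then the localization of R at the element x₁·x₂ is isomorphic as a ℂ-algebra to the Laurent polynomial ring ℂ[v₁^{±1}, v₂^{±1}], via v_j ↦ x_j, with inverse given by x_j ↦ v_j and y_j ↦ (v_{3−j} − p̂_j(v_j))·v_j^{−d_j} for j = 1, 2. -/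
open MvPolynomial AddMonoidAlgebra

noncomputable section

/-- Relations defining the coordinate ring of `S_{p₁,p₂} ⊆ ℂ⁴`:
variables `x₁ = X 0`, `x₂ = X 1`, `y₁ = X 2`, `y₂ = X 3`;
`p̂ⱼ(t) = t^(dⱼ-1)·pⱼ(1/t)` is `pⱼ.reverse`. -/
abbrev srel (p₁ p₂ : Polynomial ℂ) (d₁ d₂ : ℕ) : Set (MvPolynomial (Fin 4) ℂ) :=
  {X 2 * X 0 ^ d₁ - X 1 + Polynomial.aeval (X 0) p₁.reverse,
   X 3 * X 1 ^ d₂ - X 0 + Polynomial.aeval (X 1) p₂.reverse}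

/-- The coordinate ring `R` of `S_{p₁,p₂}`. -/
abbrev SRing (p₁ p₂ : Polynomial ℂ) (d₁ d₂ : ℕ) : Type :=
  MvPolynomial (Fin 4) ℂ ⧸ Ideal.span (srel p₁ p₂ d₁ d₂)

/-- The Laurent polynomial ring `ℂ[v₁^{±1}, v₂^{±1}]`; the monomial `v₁^a·v₂^b`
is `AddMonoidAlgebra.single (a, b) 1`. -/
abbrev Laurent2 : Type := AddMonoidAlgebra ℂ (ℤ × ℤ)

/-! After inverting `x₁x₂`, the two relations solve for `y₁ = (x₂ - p̂₁(x₁))·x₁^(-d₁)` and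
`y₂ = (x₁ - p̂₂(x₂))·x₂^(-d₂)`, so the localization is generated by the units `x₁, x₂`; this
gives a map from the Laurent polynomial ring, and these formulas for the `yⱼ` are exactly
what is needed to send the relations to zero in the opposite direction. -/

theorem Multiplicative.ofAdd_eq_zpow_mul_zpow (s : ℤ × ℤ) :
    Multiplicative.ofAdd s =
      Multiplicative.ofAdd ((1 : ℤ), (0 : ℤ)) ^ s.1 *
        Multiplicative.ofAdd ((0 : ℤ), (1 : ℤ)) ^ s.2 := by
  simp [← ofAdd_zsmul, ← ofAdd_add]

theorem Units.eq_mul_zpow_neg_of_mul_pow_eq {M : Type*} [CommMonoid M] (u : Mˣ) {y w : M}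
    (d : ℕ) (h : y * ↑u ^ d = w) : y = w * ↑(u ^ (-(d : ℤ))) := by
  rwa [zpow_neg, zpow_natCast, Units.eq_mul_inv_iff_mul_eq, Units.val_pow_eq_pow_val]

theorem AddMonoidAlgebra.isUnit_single_one {R G : Type*} [Semiring R] [AddGroup G] (g : G) :
    IsUnit (single g 1 : AddMonoidAlgebra R G) :=
  ((of R G).toHomUnits (Multiplicative.ofAdd g)).isUnit

theorem AddMonoidAlgebra.algHom_ext_int_prod {k A : Type*} [CommSemiring k] [Semiring A]
    [Algebra k A] {f g : AddMonoidAlgebra k (ℤ × ℤ) →ₐ[k] A}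
    (h₁ : f (single (1, 0) 1) = g (single (1, 0) 1))
    (h₂ : f (single (0, 1) 1) = g (single (0, 1) 1)) : f = g := by
  let unitsOf (φ : AddMonoidAlgebra k (ℤ × ℤ) →ₐ[k] A) : Multiplicative (ℤ × ℤ) →* Aˣ :=
    (Units.map φ.toMonoidHom).comp (of k (ℤ × ℤ)).toHomUnits
  have hunits : unitsOf f = unitsOf g := by
    refine MonoidHom.ext fun s => ?_
    rw [← ofAdd_toAdd s, Multiplicative.ofAdd_eq_zpow_mul_zpow, map_mul, map_mul, map_zpow,
      map_zpow, map_zpow, map_zpow]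
    congr 2 <;> exact Units.ext ‹_›
  refine (lift k A (ℤ × ℤ)).symm.injective (MonoidHom.ext fun s => ?_)
  simpa [unitsOf] using congr_arg (fun φ => (φ s : A)) hunits

section LaurentLift

variable {k A : Type*} [CommSemiring k] [CommSemiring A] [Algebra k A]

def zpowPairHom (u v : Aˣ) : Multiplicative (ℤ × ℤ) →* Aˣ :=
  (zpowersHom Aˣ u).comp (AddMonoidHom.fst ℤ ℤ).toMultiplicative *
    (zpowersHom Aˣ v).comp (AddMonoidHom.snd ℤ ℤ).toMultiplicative

def laurentLift (u v : Aˣ) : AddMonoidAlgebra k (ℤ × ℤ) →ₐ[k] A :=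
  lift k A (ℤ × ℤ) ((Units.coeHom A).comp (zpowPairHom u v))

theorem laurentLift_single (u v : Aˣ) (s : ℤ × ℤ) :
    laurentLift (k := k) u v (single s 1) = ↑(u ^ s.1 * v ^ s.2) := by
  simp [laurentLift, zpowPairHom]

end LaurentLift

namespace SRing

variable (p₁ p₂ : Polynomial ℂ) (d₁ d₂ : ℕ)

abbrev Loc : Type :=
  Localization.Away (Ideal.Quotient.mk (Ideal.span (srel p₁ p₂ d₁ d₂)) (X 0 * X 1))

def toLoc : MvPolynomial (Fin 4) ℂ →ₐ[ℂ] Loc p₁ p₂ d₁ d₂ :=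
  (IsScalarTower.toAlgHom ℂ (SRing p₁ p₂ d₁ d₂) _).comp (Ideal.Quotient.mkₐ ℂ _)

theorem toLoc_eq_zero_of_mem {r : MvPolynomial (Fin 4) ℂ} (hr : r ∈ srel p₁ p₂ d₁ d₂) :
    toLoc p₁ p₂ d₁ d₂ r = 0 := by
  simp [toLoc, Ideal.Quotient.eq_zero_iff_mem.2 (Ideal.subset_span hr)]

theorem isUnit_toLoc_X_zero_mul_X_one : IsUnit (toLoc p₁ p₂ d₁ d₂ (X 0 * X 1)) :=
  IsLocalization.Away.algebraMap_isUnit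
    (Ideal.Quotient.mk (Ideal.span (srel p₁ p₂ d₁ d₂)) (X 0 * X 1))

theorem isUnit_toLoc_X_zero : IsUnit (toLoc p₁ p₂ d₁ d₂ (X 0)) :=
  isUnit_of_mul_isUnit_left (by simpa using isUnit_toLoc_X_zero_mul_X_one p₁ p₂ d₁ d₂)

theorem isUnit_toLoc_X_one : IsUnit (toLoc p₁ p₂ d₁ d₂ (X 1)) :=
  isUnit_of_mul_isUnit_right (by simpa using isUnit_toLoc_X_zero_mul_X_one p₁ p₂ d₁ d₂)

theorem algHom_ext_of_toLoc_X {B : Type*} [CommSemiring B] [Algebra ℂ B]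
    {f g : Loc p₁ p₂ d₁ d₂ →ₐ[ℂ] B}
    (h : ∀ i, f (toLoc p₁ p₂ d₁ d₂ (X i)) = g (toLoc p₁ p₂ d₁ d₂ (X i))) : f = g :=
  IsLocalization.algHom_ext
    (Submonoid.powers (Ideal.Quotient.mk (Ideal.span (srel p₁ p₂ d₁ d₂)) (X 0 * X 1))) <|
      Ideal.Quotient.algHom_ext ℂ <| MvPolynomial.algHom_ext h

def laurentCoord : Fin 4 → Laurent2 :=
  ![single (1, 0) 1, single (0, 1) 1,
    (single (0, 1) 1 - Polynomial.aeval (single (1, 0) 1 : Laurent2) p₁.reverse) *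
      single (-(d₁ : ℤ), 0) 1,
    (single (1, 0) 1 - Polynomial.aeval (single (0, 1) 1 : Laurent2) p₂.reverse) *
      single (0, -(d₂ : ℤ)) 1]

theorem aeval_laurentCoord_eq_zero_of_mem {r : MvPolynomial (Fin 4) ℂ}
    (hr : r ∈ srel p₁ p₂ d₁ d₂) : aeval (laurentCoord p₁ p₂ d₁ d₂) r = 0 := by
  have h₁ : (single ((d₁ : ℤ), 0) 1 : Laurent2) * single (-(d₁ : ℤ), 0) 1 = 1 := by
    simp [single_mul_single, AddMonoidAlgebra.one_def, Prod.mk_zero_zero]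
  have h₂ : (single (0, (d₂ : ℤ)) 1 : Laurent2) * single (0, -(d₂ : ℤ)) 1 = 1 := by
    simp [single_mul_single, AddMonoidAlgebra.one_def, Prod.mk_zero_zero]
  rcases hr with rfl | rfl
  · simp [laurentCoord, ← Polynomial.aeval_algHom_apply]
    linear_combination
      (single (0, 1) 1 - Polynomial.aeval (single (1, 0) 1 : Laurent2) p₁.reverse) * h₁
  · simp [laurentCoord, ← Polynomial.aeval_algHom_apply]
    linear_combination
      (single (1, 0) 1 - Polynomial.aeval (single (0, 1) 1 : Laurent2) p₂.reverse) * h₂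

theorem toLoc_X_two_mul_pow :
    toLoc p₁ p₂ d₁ d₂ (X 2) * toLoc p₁ p₂ d₁ d₂ (X 0) ^ d₁ =
      toLoc p₁ p₂ d₁ d₂ (X 1) - Polynomial.aeval (toLoc p₁ p₂ d₁ d₂ (X 0)) p₁.reverse := by
  have h := toLoc_eq_zero_of_mem p₁ p₂ d₁ d₂ (Set.mem_insert _ _)
  simp only [map_add, map_sub, map_mul, map_pow, ← Polynomial.aeval_algHom_apply] at h
  linear_combination h

theorem toLoc_X_three_mul_pow :
    toLoc p₁ p₂ d₁ d₂ (X 3) * toLoc p₁ p₂ d₁ d₂ (X 1) ^ d₂ =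
      toLoc p₁ p₂ d₁ d₂ (X 0) - Polynomial.aeval (toLoc p₁ p₂ d₁ d₂ (X 1)) p₂.reverse := by
  have h := toLoc_eq_zero_of_mem p₁ p₂ d₁ d₂ (Set.mem_insert_of_mem _ rfl)
  simp only [map_add, map_sub, map_mul, map_pow, ← Polynomial.aeval_algHom_apply] at h
  linear_combination h

def quotToLaurent : SRing p₁ p₂ d₁ d₂ →ₐ[ℂ] Laurent2 :=
  Ideal.Quotient.liftₐ _ (aeval (laurentCoord p₁ p₂ d₁ d₂)) fun _ hr =>
    (Ideal.span_le (I := RingHom.ker (aeval (laurentCoord p₁ p₂ d₁ d₂)))).2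
      (fun _ hs => aeval_laurentCoord_eq_zero_of_mem p₁ p₂ d₁ d₂ hs) hr

theorem quotToLaurent_mk (r : MvPolynomial (Fin 4) ℂ) :
    quotToLaurent p₁ p₂ d₁ d₂ (Ideal.Quotient.mk _ r) = aeval (laurentCoord p₁ p₂ d₁ d₂) r :=
  rfl

def toLaurent : Loc p₁ p₂ d₁ d₂ →ₐ[ℂ] Laurent2 :=
  IsLocalization.Away.liftAlgHom (Ideal.Quotient.mk (Ideal.span (srel p₁ p₂ d₁ d₂)) (X 0 * X 1))
    (f := quotToLaurent p₁ p₂ d₁ d₂) <| by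
      simpa [quotToLaurent_mk, laurentCoord] using
        (isUnit_single_one (R := ℂ) ((1 : ℤ), (0 : ℤ))).mul (isUnit_single_one (0, 1))

theorem toLaurent_toLoc_X (i : Fin 4) :
    toLaurent p₁ p₂ d₁ d₂ (toLoc p₁ p₂ d₁ d₂ (X i)) = laurentCoord p₁ p₂ d₁ d₂ i := by
  simp [toLaurent, toLoc, quotToLaurent_mk]

def ofLaurent : Laurent2 →ₐ[ℂ] Loc p₁ p₂ d₁ d₂ :=
  laurentLift (isUnit_toLoc_X_zero p₁ p₂ d₁ d₂).unit (isUnit_toLoc_X_one p₁ p₂ d₁ d₂).unit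

theorem ofLaurent_single (s : ℤ × ℤ) :
    ofLaurent p₁ p₂ d₁ d₂ (single s 1) =
      ↑((isUnit_toLoc_X_zero p₁ p₂ d₁ d₂).unit ^ s.1 *
        (isUnit_toLoc_X_one p₁ p₂ d₁ d₂).unit ^ s.2) :=
  laurentLift_single _ _ s

theorem ofLaurent_laurentCoord (i : Fin 4) :
    ofLaurent p₁ p₂ d₁ d₂ (laurentCoord p₁ p₂ d₁ d₂ i) = toLoc p₁ p₂ d₁ d₂ (X i) := by
  have h₀ : ofLaurent p₁ p₂ d₁ d₂ (single (1, 0) 1) = toLoc p₁ p₂ d₁ d₂ (X 0) := by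
    simp [ofLaurent_single]
  have h₁ : ofLaurent p₁ p₂ d₁ d₂ (single (0, 1) 1) = toLoc p₁ p₂ d₁ d₂ (X 1) := by
    simp [ofLaurent_single]
  match i with
  | 0 => exact h₀
  | 1 => exact h₁
  | 2 =>
    simp only [laurentCoord, Matrix.cons_val, map_mul, map_sub, ← Polynomial.aeval_algHom_apply,
      h₀, h₁, ofLaurent_single, zpow_zero, mul_one]
    refine (Units.eq_mul_zpow_neg_of_mul_pow_eq _ _ ?_).symm
    simpa using toLoc_X_two_mul_pow p₁ p₂ d₁ d₂
  | 3 =>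
    simp only [laurentCoord, Matrix.cons_val, map_mul, map_sub, ← Polynomial.aeval_algHom_apply,
      h₀, h₁, ofLaurent_single, zpow_zero, one_mul]
    refine (Units.eq_mul_zpow_neg_of_mul_pow_eq _ _ ?_).symm
    simpa using toLoc_X_three_mul_pow p₁ p₂ d₁ d₂

theorem ofLaurent_comp_toLaurent :
    (ofLaurent p₁ p₂ d₁ d₂).comp (toLaurent p₁ p₂ d₁ d₂) = AlgHom.id ℂ _ :=
  algHom_ext_of_toLoc_X p₁ p₂ d₁ d₂ fun i => by
    simp [toLaurent_toLoc_X, ofLaurent_laurentCoord]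

theorem toLaurent_comp_ofLaurent :
    (toLaurent p₁ p₂ d₁ d₂).comp (ofLaurent p₁ p₂ d₁ d₂) = AlgHom.id ℂ _ :=
  algHom_ext_int_prod
    ((congr_arg (toLaurent p₁ p₂ d₁ d₂) (ofLaurent_laurentCoord p₁ p₂ d₁ d₂ 0)).trans
      (toLaurent_toLoc_X p₁ p₂ d₁ d₂ 0))
    ((congr_arg (toLaurent p₁ p₂ d₁ d₂) (ofLaurent_laurentCoord p₁ p₂ d₁ d₂ 1)).trans
      (toLaurent_toLoc_X p₁ p₂ d₁ d₂ 1))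

def laurentEquiv : Laurent2 ≃ₐ[ℂ] Loc p₁ p₂ d₁ d₂ :=
  AlgEquiv.ofAlgHom _ _ (ofLaurent_comp_toLaurent p₁ p₂ d₁ d₂)
    (toLaurent_comp_ofLaurent p₁ p₂ d₁ d₂)

end SRing

theorem stmt_1_general (p₁ p₂ : Polynomial ℂ) (d₁ d₂ : ℕ) :
    ∃ e : Laurent2 ≃ₐ[ℂ]
        Localization.Away (Ideal.Quotient.mk (Ideal.span (srel p₁ p₂ d₁ d₂)) (X 0 * X 1)),
      -- v₁ ↦ x₁ and v₂ ↦ x₂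
      e (single ((1 : ℤ), (0 : ℤ)) 1) =
        algebraMap (SRing p₁ p₂ d₁ d₂) _ (Ideal.Quotient.mk _ (X 0)) ∧
      e (single ((0 : ℤ), (1 : ℤ)) 1) =
        algebraMap (SRing p₁ p₂ d₁ d₂) _ (Ideal.Quotient.mk _ (X 1)) ∧
      -- inverse: x₁ ↦ v₁, x₂ ↦ v₂
      e.symm (algebraMap (SRing p₁ p₂ d₁ d₂) _ (Ideal.Quotient.mk _ (X 0))) =
        single ((1 : ℤ), (0 : ℤ)) 1 ∧
      e.symm (algebraMap (SRing p₁ p₂ d₁ d₂) _ (Ideal.Quotient.mk _ (X 1))) =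
        single ((0 : ℤ), (1 : ℤ)) 1 ∧
      -- inverse: y₁ ↦ (v₂ − p̂₁(v₁))·v₁^(−d₁), y₂ ↦ (v₁ − p̂₂(v₂))·v₂^(−d₂)
      e.symm (algebraMap (SRing p₁ p₂ d₁ d₂) _ (Ideal.Quotient.mk _ (X 2))) =
        (single ((0 : ℤ), (1 : ℤ)) 1 -
          Polynomial.aeval (single ((1 : ℤ), (0 : ℤ)) 1 : Laurent2) p₁.reverse) *
          single (-(d₁ : ℤ), (0 : ℤ)) 1 ∧
      e.symm (algebraMap (SRing p₁ p₂ d₁ d₂) _ (Ideal.Quotient.mk _ (X 3))) =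
        (single ((1 : ℤ), (0 : ℤ)) 1 -
          Polynomial.aeval (single ((0 : ℤ), (1 : ℤ)) 1 : Laurent2) p₂.reverse) *
          single ((0 : ℤ), -(d₂ : ℤ)) 1 :=
  ⟨SRing.laurentEquiv p₁ p₂ d₁ d₂, SRing.ofLaurent_laurentCoord p₁ p₂ d₁ d₂ 0,
    SRing.ofLaurent_laurentCoord p₁ p₂ d₁ d₂ 1, SRing.toLaurent_toLoc_X p₁ p₂ d₁ d₂ 0,
    SRing.toLaurent_toLoc_X p₁ p₂ d₁ d₂ 1, SRing.toLaurent_toLoc_X p₁ p₂ d₁ d₂ 2,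
    SRing.toLaurent_toLoc_X p₁ p₂ d₁ d₂ 3⟩

theorem stmt_1 (p₁ p₂ : Polynomial ℂ) (hm₁ : p₁.Monic) (hm₂ : p₂.Monic)
    (d₁ d₂ : ℕ) (hd₁ : d₁ = p₁.natDegree + 1) (hd₂ : d₂ = p₂.natDegree + 1) :
    ∃ e : Laurent2 ≃ₐ[ℂ]
        Localization.Away (Ideal.Quotient.mk (Ideal.span (srel p₁ p₂ d₁ d₂)) (X 0 * X 1)),
      -- v₁ ↦ x₁ and v₂ ↦ x₂
      e (single ((1 : ℤ), (0 : ℤ)) 1) =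
        algebraMap (SRing p₁ p₂ d₁ d₂) _ (Ideal.Quotient.mk _ (X 0)) ∧
      e (single ((0 : ℤ), (1 : ℤ)) 1) =
        algebraMap (SRing p₁ p₂ d₁ d₂) _ (Ideal.Quotient.mk _ (X 1)) ∧
      -- inverse: x₁ ↦ v₁, x₂ ↦ v₂
      e.symm (algebraMap (SRing p₁ p₂ d₁ d₂) _ (Ideal.Quotient.mk _ (X 0))) =
        single ((1 : ℤ), (0 : ℤ)) 1 ∧
      e.symm (algebraMap (SRing p₁ p₂ d₁ d₂) _ (Ideal.Quotient.mk _ (X 1))) =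
        single ((0 : ℤ), (1 : ℤ)) 1 ∧
      -- inverse: y₁ ↦ (v₂ − p̂₁(v₁))·v₁^(−d₁), y₂ ↦ (v₁ − p̂₂(v₂))·v₂^(−d₂)
      e.symm (algebraMap (SRing p₁ p₂ d₁ d₂) _ (Ideal.Quotient.mk _ (X 2))) =
        (single ((0 : ℤ), (1 : ℤ)) 1 -
          Polynomial.aeval (single ((1 : ℤ), (0 : ℤ)) 1 : Laurent2) p₁.reverse) *
          single (-(d₁ : ℤ), (0 : ℤ)) 1 ∧
      e.symm (algebraMap (SRing p₁ p₂ d₁ d₂) _ (Ideal.Quotient.mk _ (X 3))) =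
        (single ((1 : ℤ), (0 : ℤ)) 1 -
          Polynomial.aeval (single ((0 : ℤ), (1 : ℤ)) 1 : Laurent2) p₂.reverse) *
          single ((0 : ℤ), -(d₂ : ℤ)) 1 :=
  stmt_1_general p₁ p₂ d₁ d₂
end
end

section
/- For integers d₁, d₂ ≥ 1 let G(d₁,d₂) = ⟨δ₁, δ₂, λ | δ₁ = [δ₂^{d₂}, λ^{−1}], δ₂ = [δ₁^{d₁}, λ], [δ₁^{d₁}, δ₂^{d₂}] = 1⟩. Then there is a group isomorphism G(d₁,d₂) ≅ G(d₂,d₁) sending δ₁ ↦ δ₂′, δ₂ ↦ δ₁′, λ ↦ (λ′)^{−1}, where δ₁′, δ₂′, λ′ are the generators of G(d₂,d₁). In particular, when d₁ = d₂ this gives an automorphism of G(d₁,d₁) of order two (composed with identity checks) swapping δ₁ and δ₂ and inverting λ. -/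
/-- Relators of the group `⟨δ₁, δ₂, λ | δ₁ = [δ₂^{d₂}, λ⁻¹], δ₂ = [δ₁^{d₁}, λ],
[δ₁^{d₁}, δ₂^{d₂}] = 1⟩`, where `δ₁ = of 0`, `δ₂ = of 1`, `λ = of 2` and
`[a,b] = a·b·a⁻¹·b⁻¹`. -/
def grels (d₁ d₂ : ℕ) : Set (FreeGroup (Fin 3)) :=
  { FreeGroup.of 0 * ((FreeGroup.of 1) ^ d₂ * (FreeGroup.of 2)⁻¹ *
      ((FreeGroup.of 1) ^ d₂)⁻¹ * ((FreeGroup.of 2)⁻¹)⁻¹)⁻¹,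
    FreeGroup.of 1 * ((FreeGroup.of 0) ^ d₁ * FreeGroup.of 2 *
      ((FreeGroup.of 0) ^ d₁)⁻¹ * (FreeGroup.of 2)⁻¹)⁻¹,
    (FreeGroup.of 0) ^ d₁ * (FreeGroup.of 1) ^ d₂ *
      ((FreeGroup.of 0) ^ d₁)⁻¹ * ((FreeGroup.of 1) ^ d₂)⁻¹ }

/-! The relations of `G(d₁,d₂)` on a triple `(a, b, t)` are exactly those of `G(d₂,d₁)` on
`(b, a, t⁻¹)`: the two commutator relations trade places because `(t⁻¹)⁻¹ = t`, and the third
is symmetric. So this substitution defines homomorphisms both ways, and applying it twice is the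
identity on generators. -/

open scoped commutatorElement

theorem PresentedGroup.lift_of_eq_one {α : Type*} {rels : Set (FreeGroup α)} {r : FreeGroup α}
    (hr : r ∈ rels) : FreeGroup.lift (PresentedGroup.of (rels := rels)) r = 1 := by
  have : FreeGroup.lift PresentedGroup.of = PresentedGroup.mk rels :=
    FreeGroup.ext_hom _ _ fun _ => FreeGroup.lift_apply_of
  rw [this, PresentedGroup.one_of_mem hr]

theorem forall_grels_lift_eq_one_iff {G : Type*} [Group G] (d₁ d₂ : ℕ) (a b t : G) :
    (∀ r ∈ grels d₁ d₂, FreeGroup.lift ![a, b, t] r = 1) ↔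
      a = ⁅b ^ d₂, t⁻¹⁆ ∧ b = ⁅a ^ d₁, t⁆ ∧ Commute (a ^ d₁) (b ^ d₂) := by
  simp only [grels, ← commutatorElement_def, Set.mem_insert_iff, Set.mem_singleton_iff,
    forall_eq_or_imp, forall_eq, map_mul, map_inv, map_commutatorElement, map_pow,
    FreeGroup.lift_apply_of, Matrix.cons_val_zero, Matrix.cons_val_one, Matrix.cons_val,
    mul_inv_eq_one, commutatorElement_eq_one_iff_commute]

theorem forall_grels_lift_eq_one_swap {G : Type*} [Group G] {d₁ d₂ : ℕ} {a b t : G}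
    (h : ∀ r ∈ grels d₁ d₂, FreeGroup.lift ![a, b, t] r = 1) :
    ∀ r ∈ grels d₂ d₁, FreeGroup.lift ![b, a, t⁻¹] r = 1 := by
  rw [forall_grels_lift_eq_one_iff] at h ⊢
  obtain ⟨ha, hb, hab⟩ := h
  exact ⟨by rwa [inv_inv], ha, hab.symm⟩

theorem forall_grels_lift_of_eq_one (d₁ d₂ : ℕ) :
    ∀ r ∈ grels d₁ d₂, FreeGroup.lift
      (![.of 0, .of 1, .of 2] : Fin 3 → PresentedGroup (grels d₁ d₂)) r = 1 := by
  have : (![.of 0, .of 1, .of 2] : Fin 3 → PresentedGroup (grels d₁ d₂)) = PresentedGroup.of := by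
    ext i; fin_cases i <;> rfl
  rw [this]
  exact fun _ => PresentedGroup.lift_of_eq_one

def grelsSwap (d₁ d₂ : ℕ) : PresentedGroup (grels d₁ d₂) →* PresentedGroup (grels d₂ d₁) :=
  PresentedGroup.toGroup (forall_grels_lift_eq_one_swap (forall_grels_lift_of_eq_one d₂ d₁))

theorem grelsSwap_of (d₁ d₂ : ℕ) (i : Fin 3) :
    grelsSwap d₁ d₂ (.of i) = ![.of 1, .of 0, (.of 2)⁻¹] i :=
  PresentedGroup.toGroup.of _

theorem grelsSwap_comp_grelsSwap (d₁ d₂ : ℕ) :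
    (grelsSwap d₂ d₁).comp (grelsSwap d₁ d₂) = MonoidHom.id _ := by
  refine PresentedGroup.ext fun i => ?_
  fin_cases i <;> simp [grelsSwap_of]

theorem stmt_6_general (d₁ d₂ : ℕ) :
    ∃ e : PresentedGroup (grels d₁ d₂) ≃* PresentedGroup (grels d₂ d₁),
      e (PresentedGroup.of (rels := grels d₁ d₂) (0 : Fin 3)) =
        PresentedGroup.of (rels := grels d₂ d₁) (1 : Fin 3) ∧
      e (PresentedGroup.of (rels := grels d₁ d₂) (1 : Fin 3)) =
        PresentedGroup.of (rels := grels d₂ d₁) (0 : Fin 3) ∧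
      e (PresentedGroup.of (rels := grels d₁ d₂) (2 : Fin 3)) =
        (PresentedGroup.of (rels := grels d₂ d₁) (2 : Fin 3))⁻¹ :=
  ⟨MonoidHom.toMulEquiv _ _ (grelsSwap_comp_grelsSwap d₁ d₂) (grelsSwap_comp_grelsSwap d₂ d₁),
    grelsSwap_of d₁ d₂ 0, grelsSwap_of d₁ d₂ 1, grelsSwap_of d₁ d₂ 2⟩

/-- The symmetry `G(d₁,d₂) ≅ G(d₂,d₁)`: `δ₁ ↦ δ₂′`, `δ₂ ↦ δ₁′`, `λ ↦ (λ′)⁻¹`. -/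
theorem stmt_6 (d₁ d₂ : ℕ) (hd₁ : 1 ≤ d₁) (hd₂ : 1 ≤ d₂) :
    ∃ e : PresentedGroup (grels d₁ d₂) ≃* PresentedGroup (grels d₂ d₁),
      e (PresentedGroup.of (rels := grels d₁ d₂) (0 : Fin 3)) =
        PresentedGroup.of (rels := grels d₂ d₁) (1 : Fin 3) ∧
      e (PresentedGroup.of (rels := grels d₁ d₂) (1 : Fin 3)) =
        PresentedGroup.of (rels := grels d₂ d₁) (0 : Fin 3) ∧
      e (PresentedGroup.of (rels := grels d₁ d₂) (2 : Fin 3)) =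
        (PresentedGroup.of (rels := grels d₂ d₁) (2 : Fin 3))⁻¹ :=
  stmt_6_general d₁ d₂
end

section
/- Let n ≥ 1 and let M be the n × n real symmetric tridiagonal matrix with diagonal entries a₁, …, a_n satisfying a_i ≤ −2 for all i, entries M_{i,i+1} = M_{i+1,i} = 1, and all other entries 0. Then M is negative definite. -/
/-!
View the matrix as `D + A`, where `D = diag(aᵢ)` and `A` is the adjacency matrix of the path
graph. With the graph Laplacian `L = deg - A` this reads `D + A = diag(aᵢ + deg i) - L`, so
`xᵀ M x = ∑ (aᵢ + deg i) xᵢ² - ∑_{edges} (xᵢ - xⱼ)²`. In a path every degree is at most `2` and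
the end vertex has degree at most `1`, so the first sum is `≤ 0` and its coefficient at the end
vertex is `< 0`. Equality `xᵀ M x = 0` would force `x` to be constant (the path is connected)
and to vanish at the end vertex, i.e. `x = 0`.
-/

open Matrix Finset

namespace SimpleGraph

variable {V : Type*} [Fintype V] [DecidableEq V] (G : SimpleGraph V) [DecidableRel G.Adj]

theorem diagonal_add_adjMatrix_eq (d : V → ℝ) :
    diagonal d + G.adjMatrix ℝ = diagonal (fun v ↦ d v + G.degree v) - G.lapMatrix ℝ := by
  rw [lapMatrix, degMatrix, ← diagonal_add]
  abel

theorem dotProduct_diagonal_add_adjMatrix_mulVec (d x : V → ℝ) :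
    x ⬝ᵥ ((diagonal d + G.adjMatrix ℝ) *ᵥ x) =
      ∑ v, (d v + G.degree v) * (x v * x v) - toLinearMap₂' ℝ (G.lapMatrix ℝ) x x := by
  rw [diagonal_add_adjMatrix_eq, sub_mulVec, dotProduct_sub, toLinearMap₂'_apply']
  simp only [dotProduct, mulVec_diagonal, mul_left_comm]

theorem dotProduct_diagonal_add_adjMatrix_mulVec_neg (hG : G.Connected) {d : V → ℝ}
    (hd : ∀ v, d v + G.degree v ≤ 0) {v₀ : V} (hv₀ : d v₀ + G.degree v₀ < 0)
    {x : V → ℝ} (hx : x ≠ 0) : x ⬝ᵥ ((diagonal d + G.adjMatrix ℝ) *ᵥ x) < 0 := by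
  rw [dotProduct_diagonal_add_adjMatrix_mulVec]
  have hterm : ∀ v ∈ univ, (d v + G.degree v) * (x v * x v) ≤ 0 :=
    fun v _ ↦ mul_nonpos_of_nonpos_of_nonneg (hd v) (mul_self_nonneg _)
  have hlap : 0 ≤ toLinearMap₂' ℝ (G.lapMatrix ℝ) x x := by
    rw [toLinearMap₂'_apply']
    simpa using (posSemidef_lapMatrix ℝ G).dotProduct_mulVec_nonneg x
  by_contra! hQ
  have hsum : ∑ v, (d v + G.degree v) * (x v * x v) = 0 :=
    le_antisymm (sum_nonpos hterm) (by linarith)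
  have hconst : ∀ v, x v = x v₀ := fun v ↦
    (lapMatrix_toLinearMap₂'_apply'_eq_zero_iff_forall_reachable G x).1 (by linarith)
      v v₀ (hG.preconnected v v₀)
  have hx₀ : x v₀ = 0 := by
    simpa [hv₀.ne] using (sum_eq_zero_iff_of_nonpos hterm).1 hsum v₀ (mem_univ _)
  exact hx (funext fun v ↦ (hconst v).trans hx₀)

instance (n : ℕ) : DecidableRel (pathGraph n).Adj :=
  fun _ _ ↦ decidable_of_iff' _ pathGraph_adj

theorem pathGraph_degree_le_two {n : ℕ} (v : Fin n) : (pathGraph n).degree v ≤ 2 := by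
  calc (pathGraph n).degree v ≤ ({v.val - 1, v.val + 1} : Finset ℕ).card := by
        refine card_le_card_of_injOn Fin.val (fun u hu ↦ ?_) Fin.val_injective.injOn
        rw [mem_coe, mem_neighborFinset, pathGraph_adj] at hu
        simp only [mem_coe, mem_insert, mem_singleton]
        omega
    _ ≤ 2 := card_le_two

theorem pathGraph_degree_zero_le_one (n : ℕ) : (pathGraph (n + 1)).degree 0 ≤ 1 := by
  calc (pathGraph (n + 1)).degree 0 ≤ ({1} : Finset ℕ).card := by
        refine card_le_card_of_injOn Fin.val (fun u hu ↦ ?_) Fin.val_injective.injOn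
        rw [mem_coe, mem_neighborFinset, pathGraph_adj, Fin.val_zero] at hu
        simp only [coe_singleton, Set.mem_singleton_iff]
        omega
    _ = 1 := card_singleton 1

theorem diagonal_add_adjMatrix_pathGraph {n : ℕ} (a : Fin n → ℝ) :
    diagonal a + (pathGraph n).adjMatrix ℝ = Matrix.of fun i j =>
      if i = j then a i
      else if (i : ℕ) + 1 = (j : ℕ) ∨ (j : ℕ) + 1 = (i : ℕ) then 1 else 0 := by
  ext i j
  by_cases hij : i = j
  · subst hij
    simp
  · simp [hij, diagonal_apply_ne, pathGraph_adj]

end SimpleGraph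

open SimpleGraph

/-- The intersection matrix of an admissible chain (tridiagonal, diagonal entries
`aᵢ ≤ -2`, off-diagonal entries `1`) is negative definite. -/
theorem stmt_8 (n : ℕ) (hn : 1 ≤ n) (a : Fin n → ℝ) (ha : ∀ i, a i ≤ -2)
    (M : Matrix (Fin n) (Fin n) ℝ)
    (hM : M = Matrix.of fun i j =>
      if i = j then a i
      else if (i : ℕ) + 1 = (j : ℕ) ∨ (j : ℕ) + 1 = (i : ℕ) then 1 else 0) :
    ∀ x : Fin n → ℝ, x ≠ 0 → dotProduct x (M.mulVec x) < 0 := by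
  intro x hx
  obtain ⟨m, rfl⟩ : ∃ m, n = m + 1 := ⟨n - 1, by omega⟩
  rw [hM, ← diagonal_add_adjMatrix_pathGraph]
  refine (pathGraph (m + 1)).dotProduct_diagonal_add_adjMatrix_mulVec_neg
    (pathGraph_connected m) (fun v ↦ ?_) (v₀ := 0) ?_ hx
  · have hdeg : ((pathGraph (m + 1)).degree v : ℝ) ≤ 2 := by
      exact_mod_cast pathGraph_degree_le_two v
    linarith [ha v]
  · have hdeg : ((pathGraph (m + 1)).degree 0 : ℝ) ≤ 1 := by
      exact_mod_cast pathGraph_degree_zero_le_one m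
    linarith [ha 0]
end

section
/- Let p₁, p₂ ∈ ℂ[t] be monic, d_j = deg p_j + 1, p̂_j(t) = t^{d_j−1}p_j(1/t), and R = ℂ[x₁,x₂,y₁,y₂]/(y₁x₁^{d₁} − x₂ + p̂₁(x₁), y₂x₂^{d₂} − x₁ + p̂₂(x₂)). Then every unit of R is a nonzero constant: R^× = ℂ^×. -/
/-!
Inverting `x₁x₂` turns `R` into the Laurent polynomial ring `ℂ[x₁^±, x₂^±]`. Indeed the
relations give `y₁ x₁^d₁ = x₂ - p̂₁(x₁)` and `y₂ x₂^d₂ = x₁ - p̂₂(x₂)`, so every element of `R`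
becomes a polynomial in `x₁, x₂` after multiplication by a power of `x₁x₂`; and `ℂ[x₁, x₂]`
embeds into `R`, because `R` maps to its fraction field by `y₁ ↦ (x₂ - p̂₁(x₁)) / x₁^d₁`,
`y₂ ↦ (x₁ - p̂₂(x₂)) / x₂^d₂`. Hence for a unit `u`, both `u (x₁x₂)^n` and `u⁻¹ (x₁x₂)^m` are
polynomials in `x₁, x₂` whose product is a monomial, so `u (x₁x₂)^n = c x₁^i x₂^j`.

Substituting `x₂ = y₁ x₁^d₁ + p̂₁(x₁)` presents `R` as `ℂ[x₁, y₁, y₂] / (g)` with `x₁ ∤ g`, so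
`x₁` is a non-zero-divisor, and so is `x₂` by the symmetry `p₁ ↔ p₂`. Evaluating at a point of
`S_{p₁,p₂}` with `x₁ = 0` (resp. `x₂ = 0`) after cancelling common powers forces `i = n`
(resp. `j = n`), and cancelling `(x₁x₂)^n` gives `u = c`.
-/

open MvPolynomial

noncomputable section

theorem eq_of_mul_pow_mul_pow_eq {A K : Type*} [CommRing A] [CommRing K] [IsDomain K]
    (φ : A →+* K) {x y u v : A} (hx : x ∈ nonZeroDivisors A) (hφx : φ x = 0) (hφy : φ y ≠ 0)
    (hu : IsUnit u) (hv : IsUnit v) {i j k l : ℕ}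
    (h : u * x ^ i * y ^ j = v * x ^ k * y ^ l) : i = k := by
  wlog hik : i ≤ k generalizing i j k l u v
  · exact (this hv hu h.symm (le_of_not_ge hik)).symm
  obtain ⟨m, rfl⟩ := Nat.exists_eq_add_of_le hik
  have hcancel : u * y ^ j = v * x ^ m * y ^ l := by
    rw [← mul_cancel_left_mem_nonZeroDivisors (pow_mem hx i)]
    linear_combination h
  have hφ := congrArg φ hcancel
  simp only [map_mul, map_pow, hφx] at hφ
  rcases Nat.eq_zero_or_pos m with rfl | hm
  · rfl
  · rw [zero_pow hm.ne', mul_zero, zero_mul] at hφ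
    exact absurd hφ (mul_ne_zero (hu.map φ).ne_zero (pow_ne_zero j hφy))

def Subalgebra.mulPowMem {R A : Type*} [CommSemiring R] [CommSemiring A] [Algebra R A]
    (S : Subalgebra R A) (w : A) (hw : w ∈ S) : Subalgebra R A where
  carrier := {r | ∃ n : ℕ, r * w ^ n ∈ S}
  mul_mem' := by
    rintro r s ⟨m, hm⟩ ⟨n, hn⟩
    exact ⟨m + n, by simpa only [pow_add, mul_mul_mul_comm] using S.mul_mem hm hn⟩
  add_mem' := by
    rintro r s ⟨m, hm⟩ ⟨n, hn⟩
    refine ⟨m + n, ?_⟩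
    have : (r + s) * w ^ (m + n) = r * w ^ m * w ^ n + s * w ^ n * w ^ m := by ring
    rw [this]
    exact S.add_mem (S.mul_mem hm (S.pow_mem hw n)) (S.mul_mem hn (S.pow_mem hw m))
  algebraMap_mem' a := ⟨0, by simp [S.algebraMap_mem a]⟩

theorem Subalgebra.mem_mulPowMem {R A : Type*} [CommSemiring R] [CommSemiring A] [Algebra R A]
    {S : Subalgebra R A} {w : A} {hw : w ∈ S} {r : A} :
    r ∈ S.mulPowMem w hw ↔ ∃ n : ℕ, r * w ^ n ∈ S :=
  Iff.rfl

namespace SRing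

variable {p₁ p₂ : Polynomial ℂ} {d₁ d₂ : ℕ}

local notation "P4" => MvPolynomial (Fin 4) ℂ
local notation "P2" => MvPolynomial (Fin 2) ℂ

variable (p₁ d₁) in
def rel₁ : P4 := X 2 * X 0 ^ d₁ - X 1 + Polynomial.aeval (X 0) p₁.reverse

variable (p₂ d₂) in
def rel₂ : P4 := X 3 * X 1 ^ d₂ - X 0 + Polynomial.aeval (X 1) p₂.reverse

theorem srel_eq : srel p₁ p₂ d₁ d₂ = {rel₁ p₁ d₁, rel₂ p₂ d₂} := rfl

def mk : P4 →ₐ[ℂ] SRing p₁ p₂ d₁ d₂ := Ideal.Quotient.mkₐ ℂ _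

theorem mk_surjective : Function.Surjective (mk : P4 →ₐ[ℂ] SRing p₁ p₂ d₁ d₂) :=
  Ideal.Quotient.mkₐ_surjective ℂ _

def lift {A : Type*} [CommRing A] [Algebra ℂ A] (f : P4 →ₐ[ℂ] A)
    (h₁ : f (rel₁ p₁ d₁) = 0) (h₂ : f (rel₂ p₂ d₂) = 0) : SRing p₁ p₂ d₁ d₂ →ₐ[ℂ] A :=
  Ideal.Quotient.liftₐ _ f fun a ha ↦ by
    have : Ideal.span (srel p₁ p₂ d₁ d₂) ≤ RingHom.ker f := by
      rw [srel_eq, Ideal.span_le]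
      rintro _ (rfl | rfl)
      exacts [h₁, h₂]
    exact this ha

@[simp]
theorem lift_mk {A : Type*} [CommRing A] [Algebra ℂ A] (f : P4 →ₐ[ℂ] A)
    (h₁ : f (rel₁ p₁ d₁) = 0) (h₂ : f (rel₂ p₂ d₂) = 0) (g : P4) :
    lift f h₁ h₂ (mk g) = f g :=
  rfl

def x₁ : SRing p₁ p₂ d₁ d₂ := mk (X 0)

def x₂ : SRing p₁ p₂ d₁ d₂ := mk (X 1)

def y₁ : SRing p₁ p₂ d₁ d₂ := mk (X 2)

def y₂ : SRing p₁ p₂ d₁ d₂ := mk (X 3)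

def evalZeroOne (hm₁ : p₁.Monic) : SRing p₁ p₂ d₁ d₂ →ₐ[ℂ] ℂ :=
  lift (aeval ![0, 1, 0, -p₂.reverse.eval 1])
    (by
      rw [rel₁, map_add, ← Polynomial.aeval_algHom_apply]
      simp [← Polynomial.coeff_zero_eq_aeval_zero, hm₁.leadingCoeff])
    (by rw [rel₂, map_add, ← Polynomial.aeval_algHom_apply]; simp)

def evalOneZero (hm₂ : p₂.Monic) : SRing p₁ p₂ d₁ d₂ →ₐ[ℂ] ℂ :=
  lift (aeval ![1, 0, -p₁.reverse.eval 1, 0])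
    (by rw [rel₁, map_add, ← Polynomial.aeval_algHom_apply]; simp)
    (by
      rw [rel₂, map_add, ← Polynomial.aeval_algHom_apply]
      simp [← Polynomial.coeff_zero_eq_aeval_zero, hm₂.leadingCoeff])

def ofPlane : P2 →ₐ[ℂ] SRing p₁ p₂ d₁ d₂ := aeval ![x₁, x₂]

@[simp] theorem ofPlane_X_zero : (ofPlane (X 0) : SRing p₁ p₂ d₁ d₂) = x₁ := by simp [ofPlane]
@[simp] theorem ofPlane_X_one : (ofPlane (X 1) : SRing p₁ p₂ d₁ d₂) = x₂ := by simp [ofPlane]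

theorem algebraMap_X_ne_zero (i : Fin 2) : algebraMap P2 (FractionRing P2) (X i) ≠ 0 :=
  IsFractionRing.to_map_ne_zero_of_mem_nonZeroDivisors (mem_nonZeroDivisors_of_ne_zero (X_ne_zero i))

variable (p₁ p₂ d₁ d₂) in
def toFractionRing : SRing p₁ p₂ d₁ d₂ →ₐ[ℂ] FractionRing P2 :=
  let a := algebraMap P2 (FractionRing P2) (X 0)
  let b := algebraMap P2 (FractionRing P2) (X 1)
  lift (aeval ![a, b, (b - Polynomial.aeval a p₁.reverse) / a ^ d₁,
      (a - Polynomial.aeval b p₂.reverse) / b ^ d₂])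
    (by
      rw [rel₁, map_add, ← Polynomial.aeval_algHom_apply]
      simp only [aeval_X, map_mul, map_sub, map_pow, Matrix.cons_val]
      rw [div_mul_cancel₀ _ (pow_ne_zero _ (algebraMap_X_ne_zero 0))]
      ring)
    (by
      rw [rel₂, map_add, ← Polynomial.aeval_algHom_apply]
      simp only [aeval_X, map_mul, map_sub, map_pow, Matrix.cons_val]
      rw [div_mul_cancel₀ _ (pow_ne_zero _ (algebraMap_X_ne_zero 1))]
      ring)

theorem toFractionRing_ofPlane (h : P2) :
    toFractionRing p₁ p₂ d₁ d₂ (ofPlane h) = algebraMap P2 (FractionRing P2) h := by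
  rw [← AlgHom.comp_apply, ← IsScalarTower.coe_toAlgHom' ℂ P2]
  congr 1
  ext i
  fin_cases i <;> simp [toFractionRing, x₁, x₂]

theorem ofPlane_injective : Function.Injective (ofPlane : P2 →ₐ[ℂ] SRing p₁ p₂ d₁ d₂) :=
  fun g h hgh ↦ IsFractionRing.injective P2 (FractionRing P2) <| by
    simpa only [toFractionRing_ofPlane] using congrArg (toFractionRing p₁ p₂ d₁ d₂) hgh

theorem mk_rel₁ : (mk (rel₁ p₁ d₁) : SRing p₁ p₂ d₁ d₂) = 0 :=
  Ideal.Quotient.eq_zero_iff_mem.mpr (Ideal.subset_span (Set.mem_insert _ _))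

theorem mk_rel₂ : (mk (rel₂ p₂ d₂) : SRing p₁ p₂ d₁ d₂) = 0 :=
  Ideal.Quotient.eq_zero_iff_mem.mpr (Ideal.subset_span (Set.mem_insert_of_mem _ rfl))

theorem y₁_mul_x₁_pow :
    (y₁ * x₁ ^ d₁ : SRing p₁ p₂ d₁ d₂) = x₂ - Polynomial.aeval x₁ p₁.reverse := by
  have h := (mk_rel₁ : (mk (rel₁ p₁ d₁) : SRing p₁ p₂ d₁ d₂) = 0)
  rw [rel₁, map_add, ← Polynomial.aeval_algHom_apply] at h
  simp only [map_sub, map_mul, map_pow] at h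
  change y₁ * x₁ ^ d₁ - x₂ + Polynomial.aeval x₁ p₁.reverse = 0 at h
  linear_combination h

theorem y₂_mul_x₂_pow :
    (y₂ * x₂ ^ d₂ : SRing p₁ p₂ d₁ d₂) = x₁ - Polynomial.aeval x₂ p₂.reverse := by
  have h := (mk_rel₂ : (mk (rel₂ p₂ d₂) : SRing p₁ p₂ d₁ d₂) = 0)
  rw [rel₂, map_add, ← Polynomial.aeval_algHom_apply] at h
  simp only [map_sub, map_mul, map_pow] at h
  change y₂ * x₂ ^ d₂ - x₁ + Polynomial.aeval x₂ p₂.reverse = 0 at h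
  linear_combination h

theorem x₁_mul_x₂_mem_range : (x₁ * x₂ : SRing p₁ p₂ d₁ d₂) ∈ ofPlane.range :=
  ⟨X 0 * X 1, by simp⟩

theorem mk_X_mem_mulPowMem (i : Fin 4) :
    (mk (X i) : SRing p₁ p₂ d₁ d₂) ∈ ofPlane.range.mulPowMem _ x₁_mul_x₂_mem_range := by
  have ofPlane_aeval (j : Fin 2) (p : Polynomial ℂ) :
      (ofPlane (Polynomial.aeval (X j) p) : SRing p₁ p₂ d₁ d₂) =
        Polynomial.aeval (ofPlane (X j)) p :=
    (Polynomial.aeval_algHom_apply _ _ p).symm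
  rw [Subalgebra.mem_mulPowMem]
  fin_cases i
  · exact ⟨0, X 0, by simp [x₁]⟩
  · exact ⟨0, X 1, by simp [x₂]⟩
  · refine ⟨d₁, (AlgHom.mem_range _).mpr ⟨(X 1 - Polynomial.aeval (X 0) p₁.reverse) * X 1 ^ d₁, ?_⟩⟩
    change _ = y₁ * _
    simp only [map_mul, map_sub, map_pow, ofPlane_aeval, ofPlane_X_zero, ofPlane_X_one]
    rw [mul_pow, ← mul_assoc, y₁_mul_x₁_pow]
  · refine ⟨d₂, (AlgHom.mem_range _).mpr ⟨(X 0 - Polynomial.aeval (X 1) p₂.reverse) * X 0 ^ d₂, ?_⟩⟩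
    change _ = y₂ * _
    simp only [map_mul, map_sub, map_pow, ofPlane_aeval, ofPlane_X_zero, ofPlane_X_one]
    rw [mul_pow, mul_comm (x₁ ^ d₂), ← mul_assoc, y₂_mul_x₂_pow]

theorem exists_ofPlane_eq_mul_pow (r : SRing p₁ p₂ d₁ d₂) :
    ∃ (n : ℕ) (h : MvPolynomial (Fin 2) ℂ), ofPlane h = r * (x₁ * x₂) ^ n := by
  suffices r ∈ ofPlane.range.mulPowMem _ x₁_mul_x₂_mem_range from this
  obtain ⟨f, rfl⟩ := mk_surjective r
  induction f using MvPolynomial.induction_on with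
  | C a => exact Subalgebra.algebraMap_mem _ a
  | add f g hf hg => exact map_add (mk : P4 →ₐ[ℂ] SRing p₁ p₂ d₁ d₂) f g ▸ add_mem hf hg
  | mul_X f i hf =>
    exact map_mul (mk : P4 →ₐ[ℂ] SRing p₁ p₂ d₁ d₂) f _ ▸ mul_mem hf (mk_X_mem_mulPowMem i)

variable (p₁ d₁) in
def x₂Expr : P4 := X 2 * X 0 ^ d₁ + Polynomial.aeval (X 0) p₁.reverse

variable (p₁ d₁) in
def elimX₂ : P4 →ₐ[ℂ] P4 := aeval ![X 0, x₂Expr p₁ d₁, X 2, X 3]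

variable (p₁ p₂ d₁ d₂) in
def elimRel : P4 := elimX₂ p₁ d₁ (rel₂ p₂ d₂)

theorem elimX₂_aeval (i : Fin 4) (p : Polynomial ℂ) :
    elimX₂ p₁ d₁ (Polynomial.aeval (X i) p) = Polynomial.aeval (elimX₂ p₁ d₁ (X i)) p :=
  (Polynomial.aeval_algHom_apply _ _ p).symm

theorem elimX₂_rel₁ : elimX₂ p₁ d₁ (rel₁ p₁ d₁) = 0 := by
  rw [rel₁, map_add, elimX₂_aeval]
  simp [elimX₂, x₂Expr]

theorem mk_comp_elimX₂ :
    (mk : P4 →ₐ[ℂ] SRing p₁ p₂ d₁ d₂).comp (elimX₂ p₁ d₁) = mk := by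
  ext i
  fin_cases i
  · simp [elimX₂]
  · have h : x₂Expr p₁ d₁ = rel₁ p₁ d₁ + X 1 := by rw [x₂Expr, rel₁]; ring
    simp [elimX₂, h, mk_rel₁]
  · simp [elimX₂]
  · simp [elimX₂]

theorem mk_eq_zero_iff (f : P4) :
    (mk f : SRing p₁ p₂ d₁ d₂) = 0 ↔ elimRel p₁ p₂ d₁ d₂ ∣ elimX₂ p₁ d₁ f := by
  constructor
  · intro hf
    have hf' := Ideal.Quotient.eq_zero_iff_mem.mp hf
    rw [srel_eq, Ideal.mem_span_pair] at hf'
    obtain ⟨a, b, rfl⟩ := hf'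
    simp only [map_add, map_mul, elimX₂_rel₁, mul_zero, zero_add]
    exact dvd_mul_left _ _
  · rintro ⟨g, hg⟩
    rw [← mk_comp_elimX₂, AlgHom.comp_apply, hg, map_mul, elimRel, ← AlgHom.comp_apply,
      mk_comp_elimX₂, mk_rel₂, zero_mul]

theorem elimRel_eq : elimRel p₁ p₂ d₁ d₂ =
    X 3 * x₂Expr p₁ d₁ ^ d₂ - X 0 + Polynomial.aeval (x₂Expr p₁ d₁) p₂.reverse := by
  rw [elimRel, rel₂, map_add, elimX₂_aeval]
  simp [elimX₂]

theorem not_X_zero_dvd_elimRel (hm₁ : p₁.Monic) : ¬ X 0 ∣ elimRel p₁ p₂ d₁ d₂ := by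
  set v : Fin 4 → ℂ := ![0, 0, 0, 1 - p₂.reverse.eval 1]
  have hx₂ : aeval v (x₂Expr p₁ d₁) = 1 := by
    rw [x₂Expr, map_add, ← Polynomial.aeval_algHom_apply]
    simp [v, ← Polynomial.coeff_zero_eq_aeval_zero, hm₁.leadingCoeff]
  have hrel : aeval v (elimRel p₁ p₂ d₁ d₂) = 1 := by
    rw [elimRel_eq, map_add, map_sub, map_mul, map_pow, ← Polynomial.aeval_algHom_apply, hx₂]
    simp [v]
  intro h
  simpa [v, hrel] using map_dvd (aeval v) h

theorem x₁_mem_nonZeroDivisors (hm₁ : p₁.Monic) :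
    (x₁ : SRing p₁ p₂ d₁ d₂) ∈ nonZeroDivisors _ := by
  have hcoprime : IsRelPrime (elimRel p₁ p₂ d₁ d₂) (X 0) :=
    (X_prime.irreducible.isRelPrime_iff_not_dvd.mpr (not_X_zero_dvd_elimRel hm₁)).symm
  rw [mem_nonZeroDivisors_iff_right]
  intro r hr
  obtain ⟨f, rfl⟩ := mk_surjective r
  rw [x₁, ← map_mul, mk_eq_zero_iff, map_mul] at hr
  rw [mk_eq_zero_iff]
  exact hcoprime.dvd_of_dvd_mul_right (by simpa [elimX₂] using hr)

def swapVars : Equiv.Perm (Fin 4) := Equiv.swap 0 1 * Equiv.swap 2 3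

theorem rename_swapVars_rel₁ : rename swapVars (rel₁ p₁ d₁) = rel₂ p₁ d₁ := by
  rw [rel₁, rel₂, map_add, ← Polynomial.aeval_algHom_apply]
  simp [swapVars, Equiv.swap_apply_def]

theorem rename_swapVars_rel₂ : rename swapVars (rel₂ p₂ d₂) = rel₁ p₂ d₂ := by
  rw [rel₁, rel₂, map_add, ← Polynomial.aeval_algHom_apply]
  simp [swapVars, Equiv.swap_apply_def]

variable (p₁ p₂ d₁ d₂) in
def swap : SRing p₁ p₂ d₁ d₂ ≃ₐ[ℂ] SRing p₂ p₁ d₂ d₁ :=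
  Ideal.quotientEquivAlg _ _ (renameEquiv ℂ swapVars) <| by
    rw [Ideal.map_span, srel_eq, srel_eq, Set.pair_comm]
    simp [Set.image_pair, rename_swapVars_rel₁, rename_swapVars_rel₂]

theorem swap_x₂ : swap p₁ p₂ d₁ d₂ x₂ = x₁ := by
  simp [swap, x₂, x₁, mk, swapVars, Equiv.swap_apply_def]

theorem x₂_mem_nonZeroDivisors (hm₂ : p₂.Monic) :
    (x₂ : SRing p₁ p₂ d₁ d₂) ∈ nonZeroDivisors _ :=
  mem_nonZeroDivisors_of_injective (swap p₁ p₂ d₁ d₂).injective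
    (swap_x₂ ▸ x₁_mem_nonZeroDivisors hm₂)

@[simp] theorem evalZeroOne_x₁ (hm₁ : p₁.Monic) :
    evalZeroOne (p₂ := p₂) (d₁ := d₁) (d₂ := d₂) hm₁ x₁ = 0 := by
  simp [evalZeroOne, x₁]

@[simp] theorem evalZeroOne_x₂ (hm₁ : p₁.Monic) :
    evalZeroOne (p₂ := p₂) (d₁ := d₁) (d₂ := d₂) hm₁ x₂ = 1 := by
  simp [evalZeroOne, x₂]

@[simp] theorem evalOneZero_x₁ (hm₂ : p₂.Monic) :
    evalOneZero (p₁ := p₁) (d₁ := d₁) (d₂ := d₂) hm₂ x₁ = 1 := by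
  simp [evalOneZero, x₁]

@[simp] theorem evalOneZero_x₂ (hm₂ : p₂.Monic) :
    evalOneZero (p₁ := p₁) (d₁ := d₁) (d₂ := d₂) hm₂ x₂ = 0 := by
  simp [evalOneZero, x₂]

theorem ofPlane_monomial (m : Fin 2 →₀ ℕ) (c : ℂ) :
    (ofPlane (monomial m c) : SRing p₁ p₂ d₁ d₂) = algebraMap ℂ _ c * x₁ ^ m 0 * x₂ ^ m 1 := by
  simp [ofPlane, aeval_monomial, Finsupp.prod_fintype, Fin.prod_univ_two, mul_assoc]

theorem exists_unit_mul_pow_eq (u : (SRing p₁ p₂ d₁ d₂)ˣ) :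
    ∃ (n : ℕ) (c : ℂˣ) (i j : ℕ),
      (u : SRing p₁ p₂ d₁ d₂) * x₁ ^ n * x₂ ^ n = algebraMap ℂ _ c * x₁ ^ i * x₂ ^ j := by
  obtain ⟨n, h, hh⟩ := exists_ofPlane_eq_mul_pow (u : SRing p₁ p₂ d₁ d₂)
  obtain ⟨n', h', hh'⟩ := exists_ofPlane_eq_mul_pow (↑u⁻¹ : SRing p₁ p₂ d₁ d₂)
  have hprod : h * h' = monomial (Finsupp.single 0 (n + n') + Finsupp.single 1 (n + n')) 1 := by
    apply ofPlane_injective (p₁ := p₁) (p₂ := p₂) (d₁ := d₁) (d₂ := d₂)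
    rw [map_mul, hh, hh', ofPlane_monomial, mul_mul_mul_comm, u.mul_inv, one_mul, ← pow_add, mul_pow]
    simp
  obtain ⟨m, c, -, hc, rfl⟩ := dvd_monomial_one_iff_exists.mp (Dvd.intro h' hprod)
  exact ⟨n, hc.unit, m 0, m 1, by rw [hc.unit_spec, ← ofPlane_monomial, hh, mul_pow, mul_assoc]⟩

end SRing

theorem stmt_16_general (p₁ p₂ : Polynomial ℂ) (hm₁ : p₁.Monic) (hm₂ : p₂.Monic)
    (d₁ d₂ : ℕ) :
    ∀ u : (SRing p₁ p₂ d₁ d₂)ˣ, ∃ c : ℂˣ,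
      (u : SRing p₁ p₂ d₁ d₂) = algebraMap ℂ (SRing p₁ p₂ d₁ d₂) (c : ℂ) := by
  intro u
  obtain ⟨n, c, i, j, h⟩ := SRing.exists_unit_mul_pow_eq u
  have hx₁ := SRing.x₁_mem_nonZeroDivisors (p₂ := p₂) (d₁ := d₁) (d₂ := d₂) hm₁
  have hx₂ := SRing.x₂_mem_nonZeroDivisors (p₁ := p₁) (d₁ := d₁) (d₂ := d₂) hm₂
  have hi : n = i := eq_of_mul_pow_mul_pow_eq (SRing.evalZeroOne hm₁).toRingHom hx₁
    (by simp) (by simp) u.isUnit (c.isUnit.map _) h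
  have h' : (u : SRing p₁ p₂ d₁ d₂) * SRing.x₂ ^ n * SRing.x₁ ^ n =
      algebraMap ℂ _ c * SRing.x₂ ^ j * SRing.x₁ ^ i := by
    rw [mul_right_comm, h, mul_right_comm]
  have hj : n = j := eq_of_mul_pow_mul_pow_eq (SRing.evalOneZero hm₂).toRingHom hx₂
    (by simp) (by simp) u.isUnit (c.isUnit.map _) h'
  subst hi hj
  refine ⟨c, ?_⟩
  rwa [mul_assoc, mul_assoc, ← mul_pow, mul_cancel_right_mem_nonZeroDivisors
    (pow_mem (mul_mem hx₁ hx₂) n)] at h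

/-- Every unit of the coordinate ring of `S_{p₁,p₂}` is a nonzero constant. -/
theorem stmt_16 (p₁ p₂ : Polynomial ℂ) (hm₁ : p₁.Monic) (hm₂ : p₂.Monic)
    (d₁ d₂ : ℕ) (hd₁ : d₁ = p₁.natDegree + 1) (hd₂ : d₂ = p₂.natDegree + 1) :
    ∀ u : (SRing p₁ p₂ d₁ d₂)ˣ, ∃ c : ℂˣ,
      (u : SRing p₁ p₂ d₁ d₂) = algebraMap ℂ (SRing p₁ p₂ d₁ d₂) (c : ℂ) :=
  stmt_16_general p₁ p₂ hm₁ hm₂ d₁ d₂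
end
end

section
/- Let n ≥ 2 and let M be the n × n real symmetric tridiagonal matrix with diagonal entries a₁, …, a_n, off-diagonal entries 1, and 0 elsewhere, where a_i ≤ −2 for all i. For the linear system M·x = −e₁ (e₁ the first standard basis vector), the unique solution x ∈ ℝⁿ has all entries strictly positive and strictly less than 1. -/
namespace Stmt17Aux

noncomputable def S (b : ℕ → ℝ) : ℕ → ℝ
  | 0 => -1 / b 0
  | (j+1) => -1 / (b (j+1) + S b j)

noncomputable def X (r : ℕ → ℝ) : ℕ → ℝ
  | 0 => r 0
  | (k+1) => r (k+1) * X r k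

lemma neg_one_div_bounds {t : ℝ} (ht : t < -1) : 0 < -1 / t ∧ -1 / t < 1 := by
  have ht0 : t < 0 := by linarith
  have h1 : 0 < -1 / t := div_pos_of_neg_of_neg (by norm_num) ht0
  refine ⟨h1, ?_⟩
  have h2 : (-1 / t) * t = -1 := div_mul_cancel₀ (-1) (ne_of_lt ht0)
  nlinarith

lemma S_bounds (b : ℕ → ℝ) (hb : ∀ j, b j ≤ -2) : ∀ j, 0 < S b j ∧ S b j < 1 := by
  intro j
  induction j with
  | zero =>
    simp only [S]
    exact neg_one_div_bounds (by linarith [hb 0])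
  | succ k ih =>
    simp only [S]
    exact neg_one_div_bounds (by linarith [hb (k+1), ih.2])

lemma S_rec (b : ℕ → ℝ) (hb : ∀ j, b j ≤ -2) (j : ℕ) :
    (b (j+1) + S b j) * S b (j+1) = -1 := by
  have h1 := S_bounds b hb j
  have hd : b (j+1) + S b j < -1 := by linarith [hb (j+1), h1.2]
  have hd0 : b (j+1) + S b j ≠ 0 := by intro h; rw [h] at hd; norm_num at hd
  simp only [S]
  field_simp

lemma S_rec0 (b : ℕ → ℝ) (hb : ∀ j, b j ≤ -2) : b 0 * S b 0 = -1 := by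
  have hd0 : b 0 ≠ 0 := by intro h; have := hb 0; rw [h] at this; norm_num at this
  simp only [S]
  field_simp

lemma X_bounds (r : ℕ → ℝ) (hr : ∀ i, 0 < r i ∧ r i < 1) :
    ∀ k, 0 < X r k ∧ X r k < 1 := by
  intro k
  induction k with
  | zero => simpa [X] using hr 0
  | succ k ih =>
    have h := hr (k+1)
    simp only [X]
    constructor
    · exact mul_pos h.1 ih.1
    · nlinarith [ih.1, ih.2, h.1, h.2]



lemma mulVec_row (n : ℕ) (a : Fin n → ℝ) (y : Fin n → ℝ) (Y : ℕ → ℝ)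
    (hY : ∀ (k : ℕ) (h : k < n), Y k = y ⟨k, h⟩) (hY0 : ∀ k, n ≤ k → Y k = 0)
    (i : Fin n) :
    (Matrix.of fun i j : Fin n =>
      if i = j then a i
      else if (i : ℕ) + 1 = (j : ℕ) ∨ (j : ℕ) + 1 = (i : ℕ) then (1:ℝ) else 0).mulVec y i
    = (if 1 ≤ (i : ℕ) then Y ((i : ℕ) - 1) else 0) + a i * Y (i : ℕ) + Y ((i : ℕ) + 1) := by
  have key : ∀ j : Fin n,
      (if i = j then a i
       else if (i : ℕ) + 1 = (j : ℕ) ∨ (j : ℕ) + 1 = (i : ℕ) then (1:ℝ) else 0) * y j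
      = (if (j : ℕ) + 1 = (i : ℕ) then Y ((i : ℕ) - 1) else 0)
      + (if j = i then a i * Y (i : ℕ) else 0)
      + (if (i : ℕ) + 1 = (j : ℕ) then Y ((i : ℕ) + 1) else 0) := by
    intro j
    by_cases hji : j = i
    · subst hji
      have hyj : Y (j : ℕ) = y j := hY _ j.isLt
      rw [if_pos rfl, if_pos rfl, if_neg (by omega), if_neg (by omega), hyj]
      ring
    · rw [if_neg (fun h => hji h.symm), if_neg hji]
      by_cases hl : (j : ℕ) + 1 = (i : ℕ)
      · have hyj : Y ((i : ℕ) - 1) = y j := by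
          rw [hY ((i:ℕ)-1) (by omega)]
          congr 1
          exact Fin.ext (by simp; omega)
        rw [if_pos (Or.inr hl), if_pos hl, if_neg (by omega), hyj]
        ring
      · by_cases hr : (i : ℕ) + 1 = (j : ℕ)
        · have hyj : Y ((i : ℕ) + 1) = y j := by
            rw [hY ((i:ℕ)+1) (by omega)]
            congr 1
            exact Fin.ext (by simp; omega)
          rw [if_pos (Or.inl hr), if_neg hl, if_pos hr, hyj]
          ring
        · rw [if_neg (by tauto), if_neg hl, if_neg hr]
          ring
  have s1 : (∑ j : Fin n, if (j : ℕ) + 1 = (i : ℕ) then Y ((i : ℕ) - 1) else 0)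
      = (if 1 ≤ (i : ℕ) then Y ((i : ℕ) - 1) else 0) := by
    by_cases h1 : 1 ≤ (i : ℕ)
    · rw [if_pos h1]
      rw [Finset.sum_eq_single_of_mem (⟨(i:ℕ)-1, by omega⟩ : Fin n) (Finset.mem_univ _)]
      · rw [if_pos (by simp; omega)]
      · intro j _ hj
        rw [if_neg]
        intro hc
        exact hj (Fin.ext (by simp; omega))
    · rw [if_neg h1]
      apply Finset.sum_eq_zero
      intro j _
      rw [if_neg (by omega)]
  have s2 : (∑ j : Fin n, if j = i then a i * Y (i : ℕ) else 0) = a i * Y (i : ℕ) := by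
    rw [Finset.sum_ite_eq' Finset.univ i (fun _ => a i * Y (i : ℕ))]
    simp
  have s3 : (∑ j : Fin n, if (i : ℕ) + 1 = (j : ℕ) then Y ((i : ℕ) + 1) else 0)
      = Y ((i : ℕ) + 1) := by
    by_cases h2 : (i : ℕ) + 1 < n
    · rw [Finset.sum_eq_single_of_mem (⟨(i:ℕ)+1, h2⟩ : Fin n) (Finset.mem_univ _)]
      · rw [if_pos (by simp)]
      · intro j _ hj
        rw [if_neg]
        intro hc
        exact hj (Fin.ext (by simp; omega))
    · rw [hY0 _ (by omega)]
      apply Finset.sum_eq_zero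
      intro j _
      rw [if_neg]
      have := j.isLt
      omega
  simp only [Matrix.mulVec, dotProduct, Matrix.of_apply]
  rw [Finset.sum_congr rfl fun j _ => key j, Finset.sum_add_distrib, Finset.sum_add_distrib,
    s1, s2, s3]

lemma ker_triv (n : ℕ) (hn : 2 ≤ n) (A : ℕ → ℝ) (hA : ∀ k, A k ≤ -2)
    (Z : ℕ → ℝ) (hZtop : ∀ k, n ≤ k → Z k = 0)
    (E : ∀ k, k < n → (if 1 ≤ k then Z (k-1) else 0) + A k * Z k + Z (k+1) = 0) :
    ∀ k, Z k = 0 := by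
  have habs : ∀ k, 2 ≤ |A k| := by
    intro k
    rw [abs_of_nonpos (by linarith [hA k])]
    linarith [hA k]
  have mono : ∀ k, k ≤ n - 2 → |Z (n-1-k)| ≤ |Z (n-2-k)| := by
    intro k
    induction k with
    | zero =>
      intro _
      have hE := E (n-1) (by omega)
      rw [if_pos (by omega)] at hE
      have e1 : n-1-1 = n-2 := by omega
      have e2 : n-1+1 = n := by omega
      rw [e1, e2, hZtop n le_rfl] at hE
      have hz : Z (n-2) = -(A (n-1) * Z (n-1)) := by linarith
      have h2 : |Z (n-2)| = |A (n-1)| * |Z (n-1)| := by rw [hz, abs_neg, abs_mul]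
      simp only [Nat.sub_zero]
      nlinarith [habs (n-1), abs_nonneg (Z (n-1))]
    | succ k ih =>
      intro hk
      have IH := ih (by omega)
      have hE := E (n-2-k) (by omega)
      rw [if_pos (by omega)] at hE
      have e : n-1-k = n-2-k+1 := by omega
      rw [e] at IH
      have e2 : n-1-(k+1) = n-2-k := by omega
      have e3 : n-2-(k+1) = n-2-k-1 := by omega
      rw [e2, e3]
      have h1 : Z (n-2-k-1) = (-(A (n-2-k) * Z (n-2-k))) - Z (n-2-k+1) := by linarith
      have h2 := abs_sub_abs_le_abs_sub (-(A (n-2-k) * Z (n-2-k))) (Z (n-2-k+1))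
      rw [← h1] at h2
      rw [abs_neg, abs_mul] at h2
      nlinarith [habs (n-2-k), abs_nonneg (Z (n-2-k))]
  have hZ1 : |Z 1| ≤ |Z 0| := by
    have h := mono (n-2) le_rfl
    have e1 : n-1-(n-2) = 1 := by omega
    have e2 : n-2-(n-2) = 0 := by omega
    rwa [e1, e2] at h
  have hE0 := E 0 (by omega)
  rw [if_neg (by omega)] at hE0
  have hZ0 : Z 0 = 0 := by
    have h1 : Z 1 = -(A 0 * Z 0) := by linarith
    have h2 : |Z 1| = |A 0| * |Z 0| := by rw [h1, abs_neg, abs_mul]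
    have h3 : |Z 0| = 0 := by nlinarith [habs 0, abs_nonneg (Z 0)]
    exact abs_eq_zero.mp h3
  have hstep : ∀ k, Z k = 0 ∧ Z (k+1) = 0 := by
    intro k
    induction k with
    | zero =>
      refine ⟨hZ0, ?_⟩
      rw [hZ0] at hE0
      simpa using hE0
    | succ k ih =>
      refine ⟨ih.2, ?_⟩
      by_cases h : k + 1 < n
      · have hE := E (k+1) h
        rw [if_pos (by omega)] at hE
        have e : k+1-1 = k := by omega
        rw [e, ih.1, ih.2] at hE
        simpa using hE
      · exact hZtop _ (by omega)
  exact fun k => (hstep k).1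

end Stmt17Aux

open Stmt17Aux


/-- The bark of an admissible twig: for the tridiagonal matrix `M` with diagonal
entries `aᵢ ≤ -2` and off-diagonal entries `1`, the system `M·x = -e₁` has a unique
solution, and all its entries are strictly between `0` and `1`. -/
theorem stmt_17 (n : ℕ) (hn : 2 ≤ n) (a : Fin n → ℝ) (ha : ∀ i, a i ≤ -2)
    (M : Matrix (Fin n) (Fin n) ℝ)
    (hM : M = Matrix.of fun i j =>
      if i = j then a i
      else if (i : ℕ) + 1 = (j : ℕ) ∨ (j : ℕ) + 1 = (i : ℕ) then 1 else 0) :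
    (∃! x : Fin n → ℝ, M.mulVec x = -(Pi.single (⟨0, by omega⟩ : Fin n) 1)) ∧
    (∀ x : Fin n → ℝ, M.mulVec x = -(Pi.single (⟨0, by omega⟩ : Fin n) 1) →
      ∀ i, 0 < x i ∧ x i < 1) := by
  subst hM
  set i0 : Fin n := ⟨0, by omega⟩ with hi0
  set A : ℕ → ℝ := fun k => if h : k < n then a ⟨k, h⟩ else -2 with hAdef
  have hA : ∀ k, A k ≤ -2 := by
    intro k
    simp only [hAdef]
    split
    · exact ha _
    · norm_num
  have hAa : ∀ i : Fin n, A (i : ℕ) = a i := by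
    intro i
    simp only [hAdef]
    rw [dif_pos i.isLt]
  set b : ℕ → ℝ := fun j => A (n-1-j) with hbdef
  have hb : ∀ j, b j ≤ -2 := fun j => hA _
  set r : ℕ → ℝ := fun i => S b (n-1-i) with hrdef
  have hrb : ∀ i, 0 < r i ∧ r i < 1 := fun i => S_bounds b hb _
  have hrec : ∀ i, i ≤ n-2 → (A i + r (i+1)) * r i = -1 := by
    intro i hi
    have h := S_rec b hb (n-2-i)
    have e1 : n-1-i = n-2-i+1 := by omega
    have e2 : n-1-(i+1) = n-2-i := by omega
    have e3 : A i = b (n-2-i+1) := by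
      show A i = A (n-1-(n-2-i+1)); congr 1; omega
    show (A i + S b (n-1-(i+1))) * S b (n-1-i) = -1
    rw [e1, e2, e3]
    exact h
  have hlast : A (n-1) * r (n-1) = -1 := by
    have h := S_rec0 b hb
    show A (n-1) * S b (n-1-(n-1)) = -1
    rw [Nat.sub_self]
    exact h
  have hXb := X_bounds r hrb
  set x : Fin n → ℝ := fun i => X r (i : ℕ) with hxdef
  set Y : ℕ → ℝ := fun k => if k < n then X r k else 0 with hYdef
  have hYX : ∀ k, k < n → Y k = X r k := by
    intro k h; simp only [hYdef]; rw [if_pos h]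
  have hY : ∀ (k : ℕ) (h : k < n), Y k = x ⟨k, h⟩ := by
    intro k h; rw [hYX k h]
  have hY0 : ∀ k, n ≤ k → Y k = 0 := by
    intro k h; simp only [hYdef]; rw [if_neg (by omega)]
  have hX1 : ∀ k, X r (k+1) = r (k+1) * X r k := fun k => rfl
  have hsol : (Matrix.of fun i j : Fin n =>
      if i = j then a i
      else if (i : ℕ) + 1 = (j : ℕ) ∨ (j : ℕ) + 1 = (i : ℕ) then (1:ℝ) else 0).mulVec x
      = -(Pi.single i0 1) := by
    funext i
    rw [mulVec_row n a x Y hY hY0 i]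
    simp only [Pi.neg_apply, Pi.single_apply]
    by_cases h0 : (i : ℕ) = 0
    · have c2 : (if i = i0 then (1:ℝ) else 0) = 1 := if_pos (Fin.ext h0)
      rw [c2, h0]
      rw [if_neg (show ¬ (1:ℕ) ≤ 0 by omega), hYX 0 (by omega), hYX 1 (by omega)]
      have hai : a i = A 0 := by rw [← hAa i, h0]
      have h := hrec 0 (by omega)
      have e1 : X r 1 = r 1 * X r 0 := hX1 0
      have e0 : X r 0 = r 0 := rfl
      rw [hai, e1, e0]
      linear_combination h
    · have c2 : (if i = i0 then (1:ℝ) else 0) = 0 := if_neg (fun h => h0 (by rw [h]))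
      rw [c2]
      by_cases hl : (i : ℕ) = n - 1
      · rw [hl]
        rw [if_pos (show 1 ≤ n-1 by omega), hYX (n-1-1) (by omega), hYX (n-1) (by omega),
          hY0 (n-1+1) (by omega)]
        have hai : a i = A (n-1) := by rw [← hAa i, hl]
        have e1 : n-1-1 = n-2 := by omega
        have e2 : X r (n-1) = r (n-1) * X r (n-2) := by
          have e : n-1 = (n-2)+1 := by omega
          rw [e, hX1 (n-2)]
        rw [hai, e1, e2]
        linear_combination (X r (n-2)) * hlast
      · rw [if_pos (show 1 ≤ (i:ℕ) by omega), hYX ((i:ℕ)-1) (by omega), hYX (i:ℕ) i.isLt,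
          hYX ((i:ℕ)+1) (by omega)]
        have hai : a i = A (i : ℕ) := (hAa i).symm
        have e2 : X r (i : ℕ) = r (i : ℕ) * X r ((i:ℕ)-1) := by
          have e : (i : ℕ) = ((i:ℕ)-1)+1 := by omega
          conv_lhs => rw [e]
          rw [hX1 ((i:ℕ)-1), ← e]
        have e3 : X r ((i:ℕ)+1) = r ((i:ℕ)+1) * X r (i:ℕ) := hX1 _
        have h := hrec (i : ℕ) (by omega)
        rw [hai, e3, e2]
        linear_combination (X r ((i:ℕ)-1)) * h
  have huniq : ∀ y : Fin n → ℝ,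
      (Matrix.of fun i j : Fin n =>
        if i = j then a i
        else if (i : ℕ) + 1 = (j : ℕ) ∨ (j : ℕ) + 1 = (i : ℕ) then (1:ℝ) else 0).mulVec y
        = -(Pi.single i0 1) → y = x := by
    intro y hy
    set z : Fin n → ℝ := y - x with hzdef
    have hz : (Matrix.of fun i j : Fin n =>
        if i = j then a i
        else if (i : ℕ) + 1 = (j : ℕ) ∨ (j : ℕ) + 1 = (i : ℕ) then (1:ℝ) else 0).mulVec z = 0 := by
      simp only [hzdef]
      rw [Matrix.mulVec_sub, hy, hsol]
      simp
    set Z : ℕ → ℝ := fun k => if h : k < n then z ⟨k, h⟩ else 0 with hZdef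
    have hZy : ∀ (k : ℕ) (h : k < n), Z k = z ⟨k, h⟩ := by
      intro k h; simp only [hZdef]; rw [dif_pos h]
    have hZ0 : ∀ k, n ≤ k → Z k = 0 := by
      intro k h; simp only [hZdef]; rw [dif_neg (by omega)]
    have E : ∀ k, k < n → (if 1 ≤ k then Z (k-1) else 0) + A k * Z k + Z (k+1) = 0 := by
      intro k hk
      have h := congrFun hz ⟨k, hk⟩
      rw [mulVec_row n a z Z hZy hZ0 ⟨k, hk⟩] at h
      simp only [Pi.zero_apply] at h
      have : a ⟨k, hk⟩ = A k := (hAa ⟨k, hk⟩).symm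
      rw [this] at h
      exact h
    have hker := ker_triv n hn A hA Z hZ0 E
    have hz0 : z = 0 := by
      funext i
      have := hker (i : ℕ)
      rw [hZy (i : ℕ) i.isLt] at this
      simpa using this
    have hyx : y - x = 0 := hz0
    exact sub_eq_zero.mp hyx
  refine ⟨⟨x, hsol, huniq⟩, ?_⟩
  intro y hy i
  rw [huniq y hy]
  exact ⟨(hXb (i : ℕ)).1, (hXb (i : ℕ)).2⟩
end
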